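/- arXiv:2406.10420 — 6 statements merged into one kernel-verified Lean document; each statement's English description precedes it below -/
import Mathlib

section
/- Let G be a directed graph and let S be a strongly connected component of G. Let P be a subgraph of G with a distinguished vertex set ∂P such that every edge of G with one endpoint in V(P)\∂P has both endpoints in V(P) (i.e., V(P)\∂P has no edges leaving P). If S ∩ ∂P ≠ ∅, then the set of vertices v ∈ V(P) such that v lies on a directed path within P connecting two elements of S ∩ ∂P equals S ∩ V(P). -/
/-!
A path of `G` that ends inside `P` stays in `P` after its last visit to `∂P`, because edges at
interior vertices of `P` are edges of `P`; symmetrically for the part of a path before its first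
visit to `∂P`. So if `x ∈ S ∩ ∂P` and `v ∈ S ∩ V(P)`, the cycle `x ⇝ v ⇝ x` through `S` yields
boundary vertices `a, b`, still in `S`, with `a ⇝ v ⇝ b` inside `P`. The reverse inclusion holds
because paths in `P` are paths in `G`.
-/

open Relation

section

variable {V : Type*}

structure IsPiece (E EP : V → V → Prop) (VP bP : Set V) : Prop where
  edge : ∀ u v, EP u v → E u v ∧ u ∈ VP ∧ v ∈ VP
  closed : ∀ u v, E u v → (u ∈ VP \ bP ∨ v ∈ VP \ bP) → EP u v

namespace IsPiece

variable {E EP : V → V → Prop} {VP bP : Set V}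

theorem reflTransGen_of_reflTransGen (hP : IsPiece E EP VP bP) {a b : V}
    (h : ReflTransGen EP a b) : ReflTransGen E a b :=
  ReflTransGen.mono (fun u v huv => (hP.edge u v huv).1) _ _ h

theorem swap (hP : IsPiece E EP VP bP) : IsPiece (flip E) (flip EP) VP bP where
  edge u v huv := by
    obtain ⟨hE, hv, hu⟩ := hP.edge v u huv
    exact ⟨hE, hu, hv⟩
  closed u v huv hint := hP.closed v u huv hint.symm

theorem exists_boundary_reflTransGen (hP : IsPiece E EP VP bP) {u v : V} (hu : u ∈ bP)
    (h : ReflTransGen E u v) (hv : v ∈ VP) :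
    ∃ a ∈ bP, ReflTransGen E u a ∧ ReflTransGen EP a v := by
  induction h with
  | refl => exact ⟨u, hu, .refl, .refl⟩
  | @tail w x huw hwx ih =>
    by_cases hx : x ∈ bP
    · exact ⟨x, hx, huw.tail hwx, .refl⟩
    · have hwxP : EP w x := hP.closed w x hwx (.inr ⟨hv, hx⟩)
      obtain ⟨a, ha, hua, haw⟩ := ih (hP.edge w x hwxP).2.1
      exact ⟨a, ha, hua, haw.tail hwxP⟩

theorem exists_reflTransGen_boundary (hP : IsPiece E EP VP bP) {u v : V} (hu : u ∈ VP)
    (h : ReflTransGen E u v) (hv : v ∈ bP) :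
    ∃ b ∈ bP, ReflTransGen EP u b ∧ ReflTransGen E b v := by
  obtain ⟨b, hb, hvb, hbu⟩ :=
    hP.swap.exists_boundary_reflTransGen hv (reflTransGen_swap.mpr h) hu
  exact ⟨b, hb, reflTransGen_swap.mp hbu, reflTransGen_swap.mp hvb⟩

end IsPiece

end

theorem stmt0_general {V : Type*} (E EP : V → V → Prop) (VP bP : Set V)
    (hEP : ∀ u v, EP u v → E u v ∧ u ∈ VP ∧ v ∈ VP)
    (hclosed : ∀ u v, E u v → (u ∈ VP \ bP ∨ v ∈ VP \ bP) → EP u v)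
    (S : Set V)
    (hS : ∃ r, S = {w | Relation.ReflTransGen E r w ∧ Relation.ReflTransGen E w r})
    (hne : (S ∩ bP).Nonempty) :
    {v | v ∈ VP ∧ (∃ a ∈ S ∩ bP, Relation.ReflTransGen EP a v) ∧
        (∃ b ∈ S ∩ bP, Relation.ReflTransGen EP v b)} = S ∩ VP := by
  have hP : IsPiece E EP VP bP := ⟨hEP, hclosed⟩
  obtain ⟨r, rfl⟩ := hS
  ext v
  constructor
  · rintro ⟨hv, ⟨a, ⟨⟨hra, -⟩, -⟩, hav⟩, ⟨b, ⟨⟨-, hbr⟩, -⟩, hvb⟩⟩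
    exact ⟨⟨hra.trans (hP.reflTransGen_of_reflTransGen hav),
      (hP.reflTransGen_of_reflTransGen hvb).trans hbr⟩, hv⟩
  · rintro ⟨⟨hrv, hvr⟩, hv⟩
    obtain ⟨x, ⟨hrx, hxr⟩, hx⟩ := hne
    obtain ⟨a, ha, hxa, hav⟩ := hP.exists_boundary_reflTransGen hx (hxr.trans hrv) hv
    obtain ⟨b, hb, hvb, hbx⟩ := hP.exists_reflTransGen_boundary hv (hvr.trans hrx) hx
    exact ⟨hv,
      ⟨a, ⟨⟨hrx.trans hxa, (hP.reflTransGen_of_reflTransGen hav).trans hvr⟩, ha⟩, hav⟩,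
      ⟨b, ⟨⟨hrv.trans (hP.reflTransGen_of_reflTransGen hvb), hbx.trans hxr⟩, hb⟩, hvb⟩⟩

/-- If `S` is an SCC of `G` (edge relation `E`) and `P` is a piece
(edges `EP`, vertices `VP`, boundary `bP`) such that every edge of `G` touching
`VP \ bP` is an edge of `P`, and `S ∩ bP ≠ ∅`, then the path net
`Π_P(S ∩ bP)` equals `S ∩ VP`. -/
theorem stmt0 {V : Type*} (E EP : V → V → Prop) (VP bP : Set V)
    (hbP : bP ⊆ VP)
    (hEP : ∀ u v, EP u v → E u v ∧ u ∈ VP ∧ v ∈ VP)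
    (hclosed : ∀ u v, E u v → (u ∈ VP \ bP ∨ v ∈ VP \ bP) → EP u v)
    (S : Set V)
    (hS : ∃ r, S = {w | Relation.ReflTransGen E r w ∧ Relation.ReflTransGen E w r})
    (hne : (S ∩ bP).Nonempty) :
    {v | v ∈ VP ∧ (∃ a ∈ S ∩ bP, Relation.ReflTransGen EP a v) ∧
        (∃ b ∈ S ∩ bP, Relation.ReflTransGen EP v b)} = S ∩ VP :=
  stmt0_general E EP VP bP hEP hclosed S hS hne
end

section
/- Let P be a directed acyclic graph and B = {b_1, …, b_k} ⊆ V(P), k ≥ 5, with the property that for 1 ≤ i < j ≤ k, if b_i and b_j are related by reachability in either direction then j = i+1 or (i,j) = (1,k) (cyclic consecutiveness). Suppose v ∉ B lies on a directed b_i → b_{i+1} path in P, and also lies on a directed x → y path with x, y ∈ B and {x,y} ≠ {b_i, b_{i+1}}. Then (x,y) = (b_i, b_{i-1}) or (x,y) = (b_{i+2}, b_{i+1}) (indices mod k). Moreover, v cannot simultaneously lie on some b_i → b_{i-1} path and some b_{i+2} → b_{i+1} path. -/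
/-! In a DAG reachability is antisymmetric, so `b x ⟶* v ⟶* b (i + 1)` with `v ∉ B` forces
`x ≠ i + 1`, and cyclic consecutiveness of the composite path `b x ⟶* b (i + 1)` leaves only
`x ∈ {i, i + 2}`; dually `y ∈ {i + 1, i - 1}`. Of the four combinations, `(i + 2, i - 1)` is
impossible because for `k ≥ 5` the indices `i + 2` and `i - 1` are not cyclically consecutive,
and the same obstruction, applied to `b (i + 2) ⟶* v ⟶* b (i - 1)`, gives the second claim. -/

open Relation

theorem Relation.ReflTransGen.eq_of_not_transGen_self {α : Type*} {E : α → α → Prop}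
    (hacyc : ∀ w, ¬ TransGen E w w) {a c : α}
    (hac : ReflTransGen E a c) (hca : ReflTransGen E c a) : a = c := by
  rcases reflTransGen_iff_eq_or_transGen.mp hac with h | h
  · exact h.symm
  · exact (hacyc a (h.trans_left hca)).elim

theorem ZMod.natCast_ne_zero_of_lt {k n : ℕ} (hn0 : 0 < n) (hnk : n < k) :
    (n : ZMod k) ≠ 0 := by
  rw [Ne, ZMod.natCast_eq_zero_iff]
  exact fun h => absurd (Nat.le_of_dvd hn0 h) (by omega)

section CyclicallyConsecutive

variable {V : Type*} {E : V → V → Prop} {k : ℕ} {b : ZMod k → V}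

theorem eq_add_one_or_eq_sub_one_of_reflTransGen
    (hcons : ∀ i j : ZMod k, i ≠ j →
      (ReflTransGen E (b i) (b j) ∨ ReflTransGen E (b j) (b i)) → j = i + 1 ∨ i = j + 1)
    {x y : ZMod k} (hxy : x ≠ y) (h : ReflTransGen E (b x) (b y)) :
    y = x + 1 ∨ y = x - 1 := by
  rcases hcons x y hxy (Or.inl h) with he | he
  · exact Or.inl he
  · exact Or.inr (by rw [he]; ring)

theorem not_reflTransGen_add_two_sub_one (hk : 5 ≤ k)
    (hcons : ∀ i j : ZMod k, i ≠ j →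
      (ReflTransGen E (b i) (b j) ∨ ReflTransGen E (b j) (b i)) → j = i + 1 ∨ i = j + 1)
    (i : ZMod k) : ¬ ReflTransGen E (b (i + 2)) (b (i - 1)) := by
  have h2 : ((2 : ℕ) : ZMod k) ≠ 0 := ZMod.natCast_ne_zero_of_lt (by omega) (by omega)
  have h3 : ((3 : ℕ) : ZMod k) ≠ 0 := ZMod.natCast_ne_zero_of_lt (by omega) (by omega)
  have h4 : ((4 : ℕ) : ZMod k) ≠ 0 := ZMod.natCast_ne_zero_of_lt (by omega) (by omega)
  push_cast at h2 h3 h4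
  intro h
  have hne : i + 2 ≠ i - 1 := fun he => h3 (by linear_combination he)
  rcases eq_add_one_or_eq_sub_one_of_reflTransGen hcons hne h with he | he
  · exact h4 (by linear_combination -he)
  · exact h2 (by linear_combination -he)

end CyclicallyConsecutive

theorem stmt5_general {V : Type*} (E : V → V → Prop)
    (hacyc : ∀ w, ¬ Relation.TransGen E w w)
    (k : ℕ) (hk : 5 ≤ k)
    (b : ZMod k → V)
    (hcons : ∀ i j : ZMod k, i ≠ j →
      (Relation.ReflTransGen E (b i) (b j) ∨ Relation.ReflTransGen E (b j) (b i)) →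
      j = i + 1 ∨ i = j + 1)
    (v : V) (hv : v ∉ Set.range b) (i : ZMod k)
    (hv1 : Relation.ReflTransGen E (b i) v ∧ Relation.ReflTransGen E v (b (i + 1))) :
    (∀ x y : ZMod k, Relation.ReflTransGen E (b x) v → Relation.ReflTransGen E v (b y) →
      ({x, y} : Set (ZMod k)) ≠ {i, i + 1} →
      ((x = i ∧ y = i - 1) ∨ (x = i + 2 ∧ y = i + 1))) ∧
    ¬ ((Relation.ReflTransGen E (b i) v ∧ Relation.ReflTransGen E v (b (i - 1))) ∧
       (Relation.ReflTransGen E (b (i + 2)) v ∧ Relation.ReflTransGen E v (b (i + 1)))) := by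
  obtain ⟨hiv, hvi1⟩ := hv1
  have hvb : ∀ j, v ≠ b j := fun j h => hv ⟨j, h.symm⟩
  have key := not_reflTransGen_add_two_sub_one hk hcons i
  refine ⟨fun x y hxv hvy hne => ?_, fun ⟨⟨_, hvm⟩, ⟨hp2, _⟩⟩ => key (hp2.trans hvm)⟩
  have hx : x = i ∨ x = i + 2 := by
    have hxi1 : x ≠ i + 1 := by
      rintro rfl
      exact hvb _ (hvi1.eq_of_not_transGen_self hacyc hxv)
    rcases eq_add_one_or_eq_sub_one_of_reflTransGen hcons hxi1 (hxv.trans hvi1) with he | he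
    · exact Or.inl (by linear_combination -he)
    · exact Or.inr (by linear_combination -he)
  have hy : y = i + 1 ∨ y = i - 1 := by
    have hiy : i ≠ y := by
      rintro rfl
      exact hvb _ (hvy.eq_of_not_transGen_self hacyc hiv)
    exact eq_add_one_or_eq_sub_one_of_reflTransGen hcons hiy (hiv.trans hvy)
  rcases hx with rfl | rfl <;> rcases hy with rfl | rfl
  · exact absurd rfl hne
  · exact Or.inl ⟨rfl, rfl⟩
  · exact Or.inr ⟨rfl, rfl⟩
  · exact absurd (hxv.trans hvy) key

/-- In a DAG with a cyclically consecutive boundary set `B`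
(`k ≥ 5`), if `v ∉ B` lies on a `b i → b (i+1)` path, then any other pair
`x, y ∈ B` with a `b x → v → b y` path and `{x,y} ≠ {i,i+1}` satisfies
`(x,y) = (i, i-1)` or `(x,y) = (i+2, i+1)`; moreover `v` cannot lie both on a
`b i → b (i-1)` path and on a `b (i+2) → b (i+1)` path. -/
theorem stmt5 {V : Type*} (E : V → V → Prop)
    (hacyc : ∀ w, ¬ Relation.TransGen E w w)
    (k : ℕ) (hk : 5 ≤ k)
    (b : ZMod k → V) (hb : Function.Injective b)
    (hcons : ∀ i j : ZMod k, i ≠ j →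
      (Relation.ReflTransGen E (b i) (b j) ∨ Relation.ReflTransGen E (b j) (b i)) →
      j = i + 1 ∨ i = j + 1)
    (v : V) (hv : v ∉ Set.range b) (i : ZMod k)
    (hv1 : Relation.ReflTransGen E (b i) v ∧ Relation.ReflTransGen E v (b (i + 1))) :
    (∀ x y : ZMod k, Relation.ReflTransGen E (b x) v → Relation.ReflTransGen E v (b y) →
      ({x, y} : Set (ZMod k)) ≠ {i, i + 1} →
      ((x = i ∧ y = i - 1) ∨ (x = i + 2 ∧ y = i + 1))) ∧
    ¬ ((Relation.ReflTransGen E (b i) v ∧ Relation.ReflTransGen E v (b (i - 1))) ∧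
       (Relation.ReflTransGen E (b (i + 2)) v ∧ Relation.ReflTransGen E v (b (i + 1)))) :=
  stmt5_general E hacyc k hk b hcons v hv i hv1
end

section
/- Let G be a directed graph covered by pieces (subgraphs) P_1, …, P_m whose union is G, where each piece P has a boundary ∂P (the vertices it shares with other pieces). Suppose for each piece P there is a reachability certificate X_P with ∂P ⊆ V(X_P) such that for u, v ∈ ∂P, u reaches v in P iff u reaches v in X_P. Then for any u, v in the total boundary ∂R = ⋃ ∂P_i, u reaches v in G if and only if u reaches v in X = ⋃ X_P. -/
/-!
Cut a walk of `G` into maximal runs inside single pieces. Where a run in piece `i` hands over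
to piece `j ≠ i`, the vertex lies in both pieces, hence in `∂P_i ∩ ∂P_j`, so every run goes
from boundary to boundary of its piece and can be replaced by a walk of its certificate.
Conversely, a walk of `X` changes certificates only at vertices shared by two of them; these are
vertices of `G`, hence boundary vertices of both pieces, so every run of `X` inside a single
certificate can be replaced by a walk of its piece. Both directions thus rest on one fact: if
relations meet only inside a set `A`, a walk of their union between points of `A` splits into
runs inside single relations between points of `A`.
-/

namespace Relation

variable {α β I : Type*}

def support (r : α → α → Prop) : Set α := {x | ∃ y, r x y ∨ r y x}

lemma TransGen.left_mem_support {r : α → α → Prop} {a b : α} (h : TransGen r a b) :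
    a ∈ support r := by
  obtain ⟨c, hac, -⟩ := TransGen.head'_iff.1 h
  exact ⟨c, Or.inl hac⟩

lemma TransGen.right_mem_support {r : α → α → Prop} {a b : α} (h : TransGen r a b) :
    b ∈ support r := by
  obtain ⟨c, -, hcb⟩ := TransGen.tail'_iff.1 h
  exact ⟨c, Or.inr hcb⟩

lemma ReflTransGen.iUnion_decompose (R : I → α → α → Prop) {A : Set α}
    (hjunction : ∀ i j, i ≠ j → ∀ x ∈ support (R i), x ∈ support (R j) → x ∈ A)
    {u v : α} (hu : u ∈ A) (hv : v ∈ A) (h : ReflTransGen (fun a b => ∃ i, R i a b) u v) :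
    ReflTransGen (fun a b => a ∈ A ∧ b ∈ A ∧ ∃ i, TransGen (R i) a b) u v := by
  set Run := fun a b => a ∈ A ∧ b ∈ A ∧ ∃ i, TransGen (R i) a b
  -- The walk is read from `u` onwards while carrying the open run `a → x` inside `R i`.
  suffices key : ∀ x, ReflTransGen (fun a b => ∃ i, R i a b) x v →
      ∀ i, ∀ a ∈ A, ReflTransGen (R i) a x → ReflTransGen Run a v by
    rcases h.cases_head with rfl | ⟨-, ⟨i, -⟩, -⟩
    · exact .refl
    · exact key u h i u hu .refl
  have close_run : ∀ i, ∀ a ∈ A, ∀ x ∈ A, ReflTransGen (R i) a x → ReflTransGen Run a x := by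
    intro i a ha x hx hax
    rcases reflTransGen_iff_eq_or_transGen.1 hax with rfl | hax
    · exact .refl
    · exact .single ⟨ha, hx, i, hax⟩
  intro x hxv
  induction hxv using ReflTransGen.head_induction_on with
  | refl => exact fun i a ha hav => close_run i a ha v hv hav
  | @head x y hxy _ ih =>
    intro i a ha hax
    obtain ⟨j, hxy⟩ := hxy
    by_cases hji : j = i
    · subst hji
      exact ih j a ha (hax.tail hxy)
    have hx : x ∈ A := by
      rcases reflTransGen_iff_eq_or_transGen.1 hax with rfl | hax
      · exact ha
      · exact hjunction i j (Ne.symm hji) x hax.right_mem_support ⟨y, Or.inl hxy⟩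
    exact (close_run i a ha x hx hax).trans (ih j x hx (.single hxy))

lemma ReflTransGen.of_map {f : α → β} (hf : Function.Injective f) {r : β → β → Prop}
    (hr : ∀ x y, r x y → y ∈ Set.range f) {a b : α} (h : ReflTransGen r (f a) (f b)) :
    ReflTransGen (fun a b => r (f a) (f b)) a b := by
  suffices key : ∀ x, ReflTransGen r x (f b) →
      ∀ a, x = f a → ReflTransGen (fun a b => r (f a) (f b)) a b from
    key _ h a rfl
  intro x hx
  induction hx using ReflTransGen.head_induction_on with
  | refl => exact fun a hab => hf hab ▸ .refl
  | @head x y hxy _ ih =>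
    rintro a rfl
    obtain ⟨c, rfl⟩ := hr _ _ hxy
    exact .head hxy (ih c rfl)

end Relation

open Relation

section PieceCover

variable {V W I : Type*}

/-- `∂P_i` for the cover of `⋃ i, R i` by the pieces `R i`. -/
def pieceBoundary (R : I → V → V → Prop) (i : I) : Set V :=
  {v | v ∈ support (R i) ∧ ∃ j, j ≠ i ∧ v ∈ support (R j)}

lemma mem_pieceBoundary_of_ne {R : I → V → V → Prop} {i j : I} (hij : i ≠ j) {x : V}
    (hi : x ∈ support (R i)) (hj : x ∈ support (R j)) : x ∈ pieceBoundary R i :=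
  ⟨hi, j, hij.symm, hj⟩

lemma mem_pieceBoundary_of_mem_iUnion {R : I → V → V → Prop} {i : I} {x : V}
    (hi : x ∈ support (R i)) (hx : x ∈ ⋃ j, pieceBoundary R j) : x ∈ pieceBoundary R i := by
  obtain ⟨j, hj⟩ := Set.mem_iUnion.1 hx
  by_cases hji : j = i
  · exact hji ▸ hj
  · exact mem_pieceBoundary_of_ne (Ne.symm hji) hi hj.1

lemma reflTransGen_iUnion_map_of_cert (R : I → V → V → Prop) (X : I → W → W → Prop) (ι : V → W)
    (hcert : ∀ i, ∀ a ∈ pieceBoundary R i, ∀ b ∈ pieceBoundary R i,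
      ReflTransGen (R i) a b → ReflTransGen (X i) (ι a) (ι b))
    {u v : V} (hu : u ∈ ⋃ i, pieceBoundary R i) (hv : v ∈ ⋃ i, pieceBoundary R i)
    (h : ReflTransGen (fun a b => ∃ i, R i a b) u v) :
    ReflTransGen (fun a b => ∃ i, X i a b) (ι u) (ι v) := by
  have hjunction : ∀ i j, i ≠ j → ∀ x ∈ support (R i), x ∈ support (R j) →
      x ∈ ⋃ k, pieceBoundary R k :=
    fun i j hij x hi hj => Set.mem_iUnion.2 ⟨i, mem_pieceBoundary_of_ne hij hi hj⟩
  refine ReflTransGen.lift' ι ?_ _ _ (ReflTransGen.iUnion_decompose R hjunction hu hv h)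
  rintro a b ⟨ha, hb, i, hab⟩
  have hX := hcert i a (mem_pieceBoundary_of_mem_iUnion hab.left_mem_support ha)
    b (mem_pieceBoundary_of_mem_iUnion hab.right_mem_support hb) hab.to_reflTransGen
  exact ReflTransGen.mono (fun x y hxy => ⟨i, hxy⟩) _ _ hX

lemma reflTransGen_iUnion_of_map_of_cert (R : I → V → V → Prop) (X : I → W → W → Prop)
    {ι : V → W} (hι : Function.Injective ι)
    (hcert : ∀ i, ∀ a ∈ pieceBoundary R i, ∀ b ∈ pieceBoundary R i,
      ReflTransGen (X i) (ι a) (ι b) → ReflTransGen (R i) a b)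
    (himg : ∀ i a, ι a ∈ support (X i) → a ∈ pieceBoundary R i)
    (hpriv : ∀ i j, i ≠ j → ∀ w ∈ support (X i), w ∈ support (X j) → w ∈ Set.range ι)
    {u v : V} (h : ReflTransGen (fun a b => ∃ i, X i a b) (ι u) (ι v)) :
    ReflTransGen (fun a b => ∃ i, R i a b) u v := by
  have hruns := ReflTransGen.iUnion_decompose X hpriv ⟨u, rfl⟩ ⟨v, rfl⟩ h
  refine reflTransGen_closed ?_ _ _ (ReflTransGen.of_map hι (fun _ _ hxy => hxy.2.1) hruns)
  rintro a b ⟨-, -, i, hab⟩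
  have hR := hcert i a (himg i a hab.left_mem_support) b (himg i b hab.right_mem_support)
    hab.to_reflTransGen
  exact ReflTransGen.mono (fun x y hxy => ⟨i, hxy⟩) _ _ hR

end PieceCover

/-- If a digraph `G` (edges `E` on `V`) is covered by pieces
`EP i`, with piece vertex sets `VP i`, boundaries `bP i` (vertices shared with
other pieces), and each piece has a reachability certificate `X i` (a digraph on
`W ⊇ ι(V)` whose vertices from `ι(V)` are exactly the images of `bP i`, whose
extra vertices are private to the piece, and which preserves boundary-to-boundary
reachability of the piece exactly), then for boundary vertices `u, v ∈ ∂R`,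
`u` reaches `v` in `G` iff `ι u` reaches `ι v` in the union `X` of certificates. -/
theorem stmt6 {V W I : Type*} (ι : V → W) (hι : Function.Injective ι)
    (E : V → V → Prop) (EP : I → V → V → Prop)
    (hcover : ∀ u v, E u v ↔ ∃ i, EP i u v)
    (VP : I → Set V) (hVP : ∀ i, VP i = {v | ∃ u, EP i v u ∨ EP i u v})
    (bP : I → Set V) (hbP : ∀ i, bP i = {v | v ∈ VP i ∧ ∃ j, j ≠ i ∧ v ∈ VP j})
    (X : I → W → W → Prop)
    (VX : I → Set W) (hVX : ∀ i, VX i = {w | ∃ w', X i w w' ∨ X i w' w})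
    (hcert : ∀ i, ∀ u ∈ bP i, ∀ v ∈ bP i,
      (Relation.ReflTransGen (EP i) u v ↔ Relation.ReflTransGen (X i) (ι u) (ι v)))
    (himg : ∀ i u, ι u ∈ VX i → u ∈ bP i)
    (hpriv : ∀ i j, i ≠ j → ∀ w, w ∈ VX i → w ∈ VX j → ∃ u, w = ι u) :
    ∀ u ∈ ⋃ i, bP i, ∀ v ∈ ⋃ i, bP i,
      (Relation.ReflTransGen E u v ↔
        Relation.ReflTransGen (fun a c => ∃ i, X i a c) (ι u) (ι v)) := by
  obtain rfl : E = fun a b => ∃ i, EP i a b := funext₂ fun a b => propext (hcover a b)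
  obtain rfl : VP = fun i => support (EP i) := funext hVP
  obtain rfl : VX = fun i => support (X i) := funext hVX
  obtain rfl : bP = pieceBoundary EP := funext hbP
  intro u hu v hv
  constructor
  · exact reflTransGen_iUnion_map_of_cert EP X ι (fun i a ha b hb => (hcert i a ha b hb).1) hu hv
  · refine reflTransGen_iUnion_of_map_of_cert EP X hι (fun i a ha b hb => (hcert i a ha b hb).2)
      himg fun i j hij w hi hj => (hpriv i j hij w hi hj).imp fun _ h => h.symm
end

section
/- Let G be a directed graph decomposed into pieces P_1,…,P_m covering all edges, with boundaries ∂P_i as above, and for each piece P let C_{∂P} be a directed simple cycle on the vertices ∂P. Then G is strongly connected if and only if: (1) G is connected as an undirected graph, (2) the vertices of ∂R = ⋃ ∂P_i are pairwise strongly connected in G, and (3) for every piece P, the graph P ∪ C_{∂P} is strongly connected, provided every piece with V(P) ≠ V(G) has at least one boundary vertex whenever G is connected. -/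
/-! Strong connectivity of `G` gives (1) and (2) at once. For (3), follow a `G`-path from `u`
to `v` inside `P`: either it never leaves `P`, or it leaves `P` for the first time at a boundary
vertex `b₁` and enters `P` for the last time at a boundary vertex `b₂`, and the cycle `C_{∂P}`
joins `b₁` to `b₂`. Conversely, every edge of `P ∪ C_{∂P}` can be realised by a `G`-path thanks
to (2), so by (3) both endpoints of any edge of `G` reach each other, and (1) propagates this to
all of `G`. -/

open Relation

section FirstExit

variable {α : Type*} {R S : α → α → Prop} {W B : Set α}

theorem reflTransGen_or_exists_exit (hR : ∀ a c, R a c → a ∈ W → S a c ∨ a ∈ B)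
    (hS : ∀ a c, S a c → c ∈ W) {x y : α} (hxy : ReflTransGen R x y) (hx : x ∈ W) :
    ReflTransGen S x y ∨ ∃ b ∈ B, ReflTransGen S x b := by
  induction hxy using ReflTransGen.head_induction_on with
  | refl => exact Or.inl .refl
  | @head a c hac _ ih =>
    rcases hR a c hac hx with hS_ac | haB
    · rcases ih (hS a c hS_ac) with hcy | ⟨b, hb, hcb⟩
      · exact Or.inl (.head hS_ac hcy)
      · exact Or.inr ⟨b, hb, .head hS_ac hcb⟩
    · exact Or.inr ⟨a, haB, .refl⟩

theorem reflTransGen_or_exists_entry (hR : ∀ a c, R a c → c ∈ W → S a c ∨ c ∈ B)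
    (hS : ∀ a c, S a c → a ∈ W) {x y : α} (hxy : ReflTransGen R x y) (hy : y ∈ W) :
    ReflTransGen S x y ∨ ∃ b ∈ B, ReflTransGen S b y := by
  simpa only [← reflTransGen_swap (r := S)] using
    reflTransGen_or_exists_exit (R := Function.swap R) (S := Function.swap S)
      (fun a c h => hR c a h) (fun a c h => hS c a h) (reflTransGen_swap.2 hxy) hy

end FirstExit

section Pieces

variable {V I : Type*} {E : V → V → Prop} {EP : I → V → V → Prop} {VP bP : I → Set V}

theorem left_mem_piece (hVP : ∀ i, VP i = {v | ∃ u, EP i v u ∨ EP i u v}) {i : I} {a c : V}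
    (h : EP i a c) : a ∈ VP i := by
  rw [hVP]; exact ⟨c, Or.inl h⟩

theorem right_mem_piece (hVP : ∀ i, VP i = {v | ∃ u, EP i v u ∨ EP i u v}) {i : I} {a c : V}
    (h : EP i a c) : c ∈ VP i := by
  rw [hVP]; exact ⟨a, Or.inr h⟩

theorem edge_from_piece (hcover : ∀ u v, E u v ↔ ∃ i, EP i u v)
    (hVP : ∀ i, VP i = {v | ∃ u, EP i v u ∨ EP i u v})
    (hbP : ∀ i, bP i = {v | v ∈ VP i ∧ ∃ j, j ≠ i ∧ v ∈ VP j})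
    {i : I} {a c : V} (hac : E a c) (ha : a ∈ VP i) : EP i a c ∨ a ∈ bP i := by
  obtain ⟨j, hj⟩ := (hcover a c).1 hac
  by_cases hji : j = i
  · exact Or.inl (hji ▸ hj)
  · rw [hbP]
    exact Or.inr ⟨ha, j, hji, left_mem_piece hVP hj⟩

theorem edge_into_piece (hcover : ∀ u v, E u v ↔ ∃ i, EP i u v)
    (hVP : ∀ i, VP i = {v | ∃ u, EP i v u ∨ EP i u v})
    (hbP : ∀ i, bP i = {v | v ∈ VP i ∧ ∃ j, j ≠ i ∧ v ∈ VP j})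
    {i : I} {a c : V} (hac : E a c) (hc : c ∈ VP i) : EP i a c ∨ c ∈ bP i := by
  obtain ⟨j, hj⟩ := (hcover a c).1 hac
  by_cases hji : j = i
  · exact Or.inl (hji ▸ hj)
  · rw [hbP]
    exact Or.inr ⟨hc, j, hji, right_mem_piece hVP hj⟩

theorem reflTransGen_piece_of_reflTransGen (hcover : ∀ u v, E u v ↔ ∃ i, EP i u v)
    (hVP : ∀ i, VP i = {v | ∃ u, EP i v u ∨ EP i u v})
    (hbP : ∀ i, bP i = {v | v ∈ VP i ∧ ∃ j, j ≠ i ∧ v ∈ VP j})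
    {C : I → V → V → Prop} (hC : ∀ i, ∀ u ∈ bP i, ∀ v ∈ bP i, ReflTransGen (C i) u v)
    {i : I} {u v : V} (huv : ReflTransGen E u v) (hu : u ∈ VP i) (hv : v ∈ VP i) :
    ReflTransGen (fun a c => EP i a c ∨ C i a c) u v := by
  have hEP : EP i ≤ fun a c => EP i a c ∨ C i a c := fun _ _ => Or.inl
  have hC' : C i ≤ fun a c => EP i a c ∨ C i a c := fun _ _ => Or.inr
  obtain hin | ⟨b₁, hb₁, hub₁⟩ :=
    reflTransGen_or_exists_exit (fun _ _ => edge_from_piece hcover hVP hbP)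
      (fun _ _ => right_mem_piece hVP) huv hu
  · exact ReflTransGen.mono hEP _ _ hin
  obtain hin | ⟨b₂, hb₂, hb₂v⟩ :=
    reflTransGen_or_exists_entry (fun _ _ => edge_into_piece hcover hVP hbP)
      (fun _ _ => left_mem_piece hVP) huv hv
  · exact ReflTransGen.mono hEP _ _ hin
  have hb₁b₂ := ReflTransGen.mono hC' _ _ (hC i b₁ hb₁ b₂ hb₂)
  exact ((ReflTransGen.mono hEP _ _ hub₁).trans hb₁b₂).trans (ReflTransGen.mono hEP _ _ hb₂v)

theorem reflTransGen_of_reflTransGen_piece (hcover : ∀ u v, E u v ↔ ∃ i, EP i u v)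
    {C : I → V → V → Prop} (hC : ∀ i u v, C i u v → u ∈ bP i ∧ v ∈ bP i)
    (hbnd : ∀ u ∈ ⋃ i, bP i, ∀ v ∈ ⋃ i, bP i, ReflTransGen E u v) (i : I) :
    ReflTransGen (fun a c => EP i a c ∨ C i a c) ≤ ReflTransGen E := by
  refine reflTransGen_closed fun a c hac => ?_
  rcases hac with hEP | hCi
  · exact .single ((hcover a c).2 ⟨i, hEP⟩)
  · obtain ⟨ha, hc⟩ := hC i a c hCi
    exact hbnd a (Set.mem_iUnion.2 ⟨i, ha⟩) c (Set.mem_iUnion.2 ⟨i, hc⟩)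

end Pieces

theorem stmt7_general {V I : Type*} (E : V → V → Prop) (EP : I → V → V → Prop)
    (hcover : ∀ u v, E u v ↔ ∃ i, EP i u v)
    (VP : I → Set V) (hVP : ∀ i, VP i = {v | ∃ u, EP i v u ∨ EP i u v})
    (bP : I → Set V) (hbP : ∀ i, bP i = {v | v ∈ VP i ∧ ∃ j, j ≠ i ∧ v ∈ VP j})
    (C : I → V → V → Prop)
    (hC1 : ∀ i u v, C i u v → u ∈ bP i ∧ v ∈ bP i)
    (hC2 : ∀ i, ∀ u ∈ bP i, ∀ v ∈ bP i, Relation.ReflTransGen (C i) u v) :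
    (∀ u v : V, Relation.ReflTransGen E u v) ↔
      ((∀ u v : V, Relation.ReflTransGen (fun a c => E a c ∨ E c a) u v) ∧
       (∀ u ∈ ⋃ i, bP i, ∀ v ∈ ⋃ i, bP i, Relation.ReflTransGen E u v) ∧
       (∀ i, ∀ u ∈ VP i, ∀ v ∈ VP i,
         Relation.ReflTransGen (fun a c => EP i a c ∨ C i a c) u v)) := by
  constructor
  · intro hsc
    exact ⟨fun u v => ReflTransGen.mono (fun _ _ => Or.inl) _ _ (hsc u v), fun u _ v _ => hsc u v,
      fun i u hu v hv => reflTransGen_piece_of_reflTransGen hcover hVP hbP hC2 (hsc u v) hu hv⟩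
  · rintro ⟨hconn, hbnd, hpiece⟩ u v
    have hlift := reflTransGen_of_reflTransGen_piece hcover hC1 hbnd
    refine reflTransGen_closed (fun a c hac => ?_) _ _ (hconn u v)
    rcases hac with hac | hca
    · exact .single hac
    · obtain ⟨i, hi⟩ := (hcover c a).1 hca
      exact hlift i _ _ (hpiece i a (right_mem_piece hVP hi) c (left_mem_piece hVP hi))

/-- With a piece decomposition of `G` and, for each piece, a
directed cycle `C i` on its boundary `bP i` (edges within the boundary, making
the boundary strongly connected), `G` is strongly connected iff (1) `G` is
connected as an undirected graph, (2) the total boundary is pairwise strongly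
connected in `G`, and (3) each `P ∪ C_{∂P}` is strongly connected — provided
every piece with `VP i ≠ V(G)` has a nonempty boundary whenever `G` is connected. -/
theorem stmt7 {V I : Type*} (E : V → V → Prop) (EP : I → V → V → Prop)
    (hcover : ∀ u v, E u v ↔ ∃ i, EP i u v)
    (VP : I → Set V) (hVP : ∀ i, VP i = {v | ∃ u, EP i v u ∨ EP i u v})
    (bP : I → Set V) (hbP : ∀ i, bP i = {v | v ∈ VP i ∧ ∃ j, j ≠ i ∧ v ∈ VP j})
    (C : I → V → V → Prop)
    (hC1 : ∀ i u v, C i u v → u ∈ bP i ∧ v ∈ bP i)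
    (hC2 : ∀ i, ∀ u ∈ bP i, ∀ v ∈ bP i, Relation.ReflTransGen (C i) u v)
    (hbnd : (∀ u v : V, Relation.ReflTransGen (fun a c => E a c ∨ E c a) u v) →
      ∀ i, VP i ≠ Set.univ → (bP i).Nonempty) :
    (∀ u v : V, Relation.ReflTransGen E u v) ↔
      ((∀ u v : V, Relation.ReflTransGen (fun a c => E a c ∨ E c a) u v) ∧
       (∀ u ∈ ⋃ i, bP i, ∀ v ∈ ⋃ i, bP i, Relation.ReflTransGen E u v) ∧
       (∀ i, ∀ u ∈ VP i, ∀ v ∈ VP i,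
         Relation.ReflTransGen (fun a c => EP i a c ∨ C i a c) u v)) :=
  stmt7_general E EP hcover VP hVP bP hbP C hC1 hC2
end

section
/- Let G be a directed graph with pieces as above, and suppose the total boundary ∂R is strongly connected in G and for each piece P the graph P ∪ C_{∂P} is strongly connected (where C_{∂P} is a directed cycle on ∂P). Then for any piece P and any x, y ∈ V(P), there exists a directed x→y path in G. -/
/-- If the total boundary `∂R` is strongly connected in `G` and for
each piece `P` the graph `P ∪ C_{∂P}` is strongly connected, then any two
vertices of any piece are connected by a directed path in `G`. -/
theorem stmt8 {V I : Type*} (E : V → V → Prop) (EP : I → V → V → Prop)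
    (hcover : ∀ u v, E u v ↔ ∃ i, EP i u v)
    (VP : I → Set V) (hVP : ∀ i, VP i = {v | ∃ u, EP i v u ∨ EP i u v})
    (bP : I → Set V) (hbP : ∀ i, bP i = {v | v ∈ VP i ∧ ∃ j, j ≠ i ∧ v ∈ VP j})
    (C : I → V → V → Prop)
    (hC1 : ∀ i u v, C i u v → u ∈ bP i ∧ v ∈ bP i)
    (hC2 : ∀ i, ∀ u ∈ bP i, ∀ v ∈ bP i, Relation.ReflTransGen (C i) u v)
    (hbR : ∀ u ∈ ⋃ i, bP i, ∀ v ∈ ⋃ i, bP i, Relation.ReflTransGen E u v)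
    (hPC : ∀ i, ∀ u ∈ VP i, ∀ v ∈ VP i,
      Relation.ReflTransGen (fun a c => EP i a c ∨ C i a c) u v)
    (i : I) (x y : V) (hx : x ∈ VP i) (hy : y ∈ VP i) :
    Relation.ReflTransGen E x y := by
  have h := hPC i x hx y hy
  clear hx hy
  induction h with
  | refl => exact Relation.ReflTransGen.refl
  | tail _ hbc ih =>
    refine ih.trans ?_
    rcases hbc with h | h
    · exact Relation.ReflTransGen.single ((hcover _ _).2 ⟨i, h⟩)
    · obtain ⟨hb, hc⟩ := hC1 i _ _ h
      exact hbR _ (Set.mem_iUnion.2 ⟨i, hb⟩) _ (Set.mem_iUnion.2 ⟨i, hc⟩)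
end

section
/- Let G be a digraph, P a piece of G with boundary ∂P such that all paths of G entering or exiting V(P)\∂P go through ∂P. An SCC S of P that contains no boundary vertex (S ∩ ∂P = ∅) fails to be an SCC of G if and only if there exists an SCC S' of G with S ⊆ S' and S' ∩ ∂P ≠ ∅; equivalently, iff S ⊆ Π_P(S' ∩ ∂P) for that SCC S' of G. -/
/-!
Let `S` be the component of `r` in `P`. A path of `G` leaving the interior of `P` reaches `∂P`
first by a path in `P`, and a path entering the interior last leaves `∂P` by a path in `P`.
So if the component `S'` of `r` in `G` is larger than `S`, a cycle through `r` leaving `S` meets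
`∂P`; the first and last boundary vertices on such cycles lie in `S'` and are joined to `S` within
`P`. Conversely, if `S` were an SCC of `G`, it would equal every SCC of `G` containing it, so it
could not avoid `∂P` while such an SCC meets it.
-/

open Relation Function

section StrongComponent

variable {α : Type*}

def strongComponent (R : α → α → Prop) (a : α) : Set α :=
  {w | ReflTransGen R a w ∧ ReflTransGen R w a}

variable {R R' : α → α → Prop} {a b : α}

theorem strongComponent_def (R : α → α → Prop) (a : α) :
    strongComponent R a = {w | ReflTransGen R a w ∧ ReflTransGen R w a} := rfl

theorem mem_strongComponent_self : a ∈ strongComponent R a :=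
  ⟨ReflTransGen.refl, ReflTransGen.refl⟩

theorem strongComponent_mono (h : ∀ u v, R u v → R' u v) :
    strongComponent R a ⊆ strongComponent R' a :=
  fun _ hw => ⟨ReflTransGen.mono h _ _ hw.1, ReflTransGen.mono h _ _ hw.2⟩

theorem strongComponent_eq_of_mem (hb : b ∈ strongComponent R a) :
    strongComponent R b = strongComponent R a := by
  ext w
  exact ⟨fun hw => ⟨hb.1.trans hw.1, hw.2.trans hb.2⟩,
    fun hw => ⟨hb.2.trans hw.1, hw.2.trans hb.1⟩⟩

theorem strongComponent_swap : strongComponent (swap R) a = strongComponent R a := by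
  ext w
  simp only [strongComponent, Set.mem_ofPred_eq, reflTransGen_swap, and_comm]

theorem Relation.ReflTransGen.mem_of_mem {s : Set α} (hR : ∀ u v, R u v → v ∈ s)
    (ha : a ∈ s) (h : ReflTransGen R a b) : b ∈ s := by
  induction h with
  | refl => exact ha
  | tail _ hbc _ => exact hR _ _ hbc

end StrongComponent

section Piece

variable {α : Type*} {E EP : α → α → Prop} {VP bP : Set α} {r x : α}

theorem reflTransGen_or_exists_boundary (hEP : ∀ u v, EP u v → v ∈ VP)
    (hclosed : ∀ u v, E u v → u ∈ VP \ bP → EP u v) (hr : r ∈ VP)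
    (h : ReflTransGen E r x) :
    ReflTransGen EP r x ∨ ∃ b ∈ bP, ReflTransGen EP r b ∧ ReflTransGen E b x := by
  induction h with
  | refl => exact Or.inl ReflTransGen.refl
  | @tail y x _ hyx ih =>
    rcases ih with hP | ⟨b, hb, hrb, hbx⟩
    · by_cases hy : y ∈ bP
      · exact Or.inr ⟨y, hy, hP, ReflTransGen.single hyx⟩
      · exact Or.inl (hP.tail (hclosed _ _ hyx ⟨hP.mem_of_mem hEP hr, hy⟩))
    · exact Or.inr ⟨b, hb, hrb, hbx.tail hyx⟩

theorem reflTransGen_or_exists_boundary' (hEP : ∀ u v, EP u v → u ∈ VP)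
    (hclosed : ∀ u v, E u v → v ∈ VP \ bP → EP u v) (hr : r ∈ VP)
    (h : ReflTransGen E x r) :
    ReflTransGen EP x r ∨ ∃ b ∈ bP, ReflTransGen E x b ∧ ReflTransGen EP b r := by
  have := reflTransGen_or_exists_boundary (E := swap E) (EP := swap EP)
    (fun u v h => hEP v u h) (fun u v h hu => hclosed v u h hu) hr (reflTransGen_swap.2 h)
  simpa only [reflTransGen_swap, and_comm] using this

theorem mem_strongComponent_or_boundary_nonempty
    (hEP : ∀ u v, EP u v → E u v ∧ u ∈ VP ∧ v ∈ VP)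
    (hclosed : ∀ u v, E u v → (u ∈ VP \ bP ∨ v ∈ VP \ bP) → EP u v)
    (hr : r ∈ VP) (hx : x ∈ strongComponent E r) :
    x ∈ strongComponent EP r ∨ (strongComponent E r ∩ bP).Nonempty := by
  have hEPE : ∀ u v, EP u v → E u v := fun u v h => (hEP u v h).1
  rcases reflTransGen_or_exists_boundary (fun u v h => (hEP u v h).2.2)
    (fun u v h hu => hclosed u v h (Or.inl hu)) hr hx.1 with hrx | ⟨b, hb, hrb, hbx⟩
  · rcases reflTransGen_or_exists_boundary' (fun u v h => (hEP u v h).2.1)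
      (fun u v h hv => hclosed u v h (Or.inr hv)) hr hx.2 with hxr | ⟨b, hb, hxb, hbr⟩
    · exact Or.inl ⟨hrx, hxr⟩
    · exact Or.inr ⟨b, ⟨hx.1.trans hxb, ReflTransGen.mono hEPE _ _ hbr⟩, hb⟩
  · exact Or.inr ⟨b, ⟨ReflTransGen.mono hEPE _ _ hrb, hbx.trans hx.2⟩, hb⟩

theorem exists_boundary_reflTransGen_to (hEP : ∀ u v, EP u v → E u v ∧ u ∈ VP)
    (hclosed : ∀ u v, E u v → v ∈ VP \ bP → EP u v)
    (hr : r ∈ VP) (hbd : (strongComponent E r ∩ bP).Nonempty) :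
    ∃ a ∈ strongComponent E r ∩ bP, ReflTransGen EP a r := by
  obtain ⟨b, hbr, hb⟩ := hbd
  rcases reflTransGen_or_exists_boundary' (fun u v h => (hEP u v h).2) hclosed hr hbr.2 with
    hP | ⟨a, ha, hba, har⟩
  · exact ⟨b, ⟨hbr, hb⟩, hP⟩
  · have har' := ReflTransGen.mono (fun u v h => (hEP u v h).1) _ _ har
    exact ⟨a, ⟨⟨hbr.1.trans hba, har'⟩, ha⟩, har⟩

theorem exists_boundary_reflTransGen_from (hEP : ∀ u v, EP u v → E u v ∧ v ∈ VP)
    (hclosed : ∀ u v, E u v → u ∈ VP \ bP → EP u v)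
    (hr : r ∈ VP) (hbd : (strongComponent E r ∩ bP).Nonempty) :
    ∃ c ∈ strongComponent E r ∩ bP, ReflTransGen EP r c := by
  simp only [← strongComponent_swap (R := E)] at hbd ⊢
  simpa only [reflTransGen_swap] using exists_boundary_reflTransGen_to (EP := swap EP)
    (fun u v h => hEP v u h) (fun u v h hu => hclosed v u h hu) hr hbd

end Piece

theorem stmt9_general {V : Type*} (E EP : V → V → Prop) (VP bP : Set V)
    (hEP : ∀ u v, EP u v → E u v ∧ u ∈ VP ∧ v ∈ VP)
    (hclosed : ∀ u v, E u v → (u ∈ VP \ bP ∨ v ∈ VP \ bP) → EP u v)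
    (S : Set V)
    (hS : ∃ r ∈ VP, S = {w | Relation.ReflTransGen EP r w ∧ Relation.ReflTransGen EP w r})
    (hSb : S ∩ bP = ∅) :
    (¬ ∃ r, S = {w | Relation.ReflTransGen E r w ∧ Relation.ReflTransGen E w r}) ↔
    ∃ S' : Set V,
      (∃ r, S' = {w | Relation.ReflTransGen E r w ∧ Relation.ReflTransGen E w r}) ∧
      S ⊆ S' ∧ (S' ∩ bP).Nonempty ∧
      S ⊆ {v | v ∈ VP ∧ (∃ a ∈ S' ∩ bP, Relation.ReflTransGen EP a v) ∧
            (∃ c ∈ S' ∩ bP, Relation.ReflTransGen EP v c)} := by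
  obtain ⟨r, hr, rfl⟩ := hS
  simp only [← strongComponent_def] at hSb ⊢
  have hsub : strongComponent EP r ⊆ strongComponent E r :=
    strongComponent_mono fun u v h => (hEP u v h).1
  constructor
  · intro hnot
    obtain ⟨x, hx, hxS⟩ := Set.exists_of_ssubset (hsub.ssubset_of_ne fun h => hnot ⟨r, h⟩)
    have hbd := (mem_strongComponent_or_boundary_nonempty hEP hclosed hr hx).resolve_left hxS
    obtain ⟨a, ha, har⟩ := exists_boundary_reflTransGen_to
      (fun u v h => ⟨(hEP u v h).1, (hEP u v h).2.1⟩)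
      (fun u v h hv => hclosed u v h (Or.inr hv)) hr hbd
    obtain ⟨c, hc, hrc⟩ := exists_boundary_reflTransGen_from
      (fun u v h => ⟨(hEP u v h).1, (hEP u v h).2.2⟩)
      (fun u v h hu => hclosed u v h (Or.inl hu)) hr hbd
    exact ⟨_, ⟨r, rfl⟩, hsub, hbd, fun v hv =>
      ⟨hv.1.mem_of_mem (fun u v h => (hEP u v h).2.2) hr, ⟨a, ha, har.trans hv.1⟩,
        ⟨c, hc, hv.2.trans hrc⟩⟩⟩
  · rintro ⟨S', ⟨r', rfl⟩, hS', ⟨b, hb, hbP⟩, -⟩ ⟨r'', hS''⟩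
    have hr'' : r ∈ strongComponent E r'' := hS'' ▸ mem_strongComponent_self
    have hr' : r ∈ strongComponent E r' := hS' mem_strongComponent_self
    rw [hS'', ← strongComponent_eq_of_mem hr''] at hSb
    rw [← strongComponent_eq_of_mem hr'] at hb
    exact hSb.subset ⟨hb, hbP⟩

/-- An SCC `S` of a piece `P` containing no boundary vertex fails
to be an SCC of `G` iff there is an SCC `S'` of `G` with `S ⊆ S'`,
`S' ∩ bP ≠ ∅`, and `S ⊆ Π_P(S' ∩ bP)`. -/
theorem stmt9 {V : Type*} (E EP : V → V → Prop) (VP bP : Set V)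
    (hbP : bP ⊆ VP)
    (hEP : ∀ u v, EP u v → E u v ∧ u ∈ VP ∧ v ∈ VP)
    (hclosed : ∀ u v, E u v → (u ∈ VP \ bP ∨ v ∈ VP \ bP) → EP u v)
    (S : Set V)
    (hS : ∃ r ∈ VP, S = {w | Relation.ReflTransGen EP r w ∧ Relation.ReflTransGen EP w r})
    (hSb : S ∩ bP = ∅) :
    (¬ ∃ r, S = {w | Relation.ReflTransGen E r w ∧ Relation.ReflTransGen E w r}) ↔
    ∃ S' : Set V,
      (∃ r, S' = {w | Relation.ReflTransGen E r w ∧ Relation.ReflTransGen E w r}) ∧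
      S ⊆ S' ∧ (S' ∩ bP).Nonempty ∧
      S ⊆ {v | v ∈ VP ∧ (∃ a ∈ S' ∩ bP, Relation.ReflTransGen EP a v) ∧
            (∃ c ∈ S' ∩ bP, Relation.ReflTransGen EP v c)} :=
  stmt9_general E EP VP bP hEP hclosed S hS hSb
end
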